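/- Let $A, B$ be $p \times p$ real symmetric positive definite matrices, let $\gamma > 0$, let $q$ be a natural number, and let $A \oplus \gamma I_q$ and $B \oplus \gamma I_q$ denote the $(p+q) \times (p+q)$ block-diagonal matrices with blocks $A$ (resp. $B$) and $\gamma I_q$. Then $\det\big((\tfrac{1}{2}(A \oplus \gamma I_q)^{-1} + \tfrac{1}{2}(B \oplus \gamma I_q)^{-1})^{-1}\big)^{1/2} \big/ \big(\det(A \oplus \gamma I_q)^{1/4}\det(B \oplus \gamma I_q)^{1/4}\big) = \det\big((\tfrac{1}{2}A^{-1} + \tfrac{1}{2}B^{-1})^{-1}\big)^{1/2} \big/ \big(\det(A)^{1/4}\det(B)^{1/4}\big)$. -/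

import Mathlib

open Matrix

/-!
The kernel is multiplicative under block-diagonal sums, since inversion, averaging and the
determinant all act blockwise, and the kernel of a positive definite matrix with itself is `1`.
Hence the common block `γ • 1` contributes a factor `1`.
-/

/-- The Laplacian graph kernel value between two (positive definite) matrices. -/
noncomputable def lgKernel {k : Type*} [Fintype k] [DecidableEq k]
    (A B : Matrix k k ℝ) : ℝ :=
  (((1 / 2 : ℝ) • A⁻¹ + (1 / 2 : ℝ) • B⁻¹)⁻¹).det ^ ((1 : ℝ) / 2) /
    (A.det ^ ((1 : ℝ) / 4) * B.det ^ ((1 : ℝ) / 4))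

namespace Matrix

variable {m n : Type*} [Fintype m] [Fintype n] [DecidableEq m] [DecidableEq n]

lemma inv_fromBlocks_zero_zero {α : Type*} [CommRing α] {A : Matrix m m α} {D : Matrix n n α}
    (hA : IsUnit A) (hD : IsUnit D) :
    (fromBlocks A 0 0 D)⁻¹ = fromBlocks A⁻¹ 0 0 D⁻¹ := by
  simp [inv_fromBlocks_zero₂₁_of_isUnit_iff A 0 D (iff_of_true hA hD)]

lemma PosDef.half_smul_inv_add_half_smul_inv {A B : Matrix m m ℝ} (hA : A.PosDef)
    (hB : B.PosDef) : ((1 / 2 : ℝ) • A⁻¹ + (1 / 2 : ℝ) • B⁻¹).PosDef :=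
  (hA.inv.smul (by norm_num)).add (hB.inv.smul (by norm_num))

lemma inv_half_smul_inv_add_fromBlocks {A B : Matrix m m ℝ} {C D : Matrix n n ℝ}
    (hA : IsUnit A) (hB : IsUnit B) (hC : IsUnit C) (hD : IsUnit D)
    (hAB : IsUnit ((1 / 2 : ℝ) • A⁻¹ + (1 / 2 : ℝ) • B⁻¹))
    (hCD : IsUnit ((1 / 2 : ℝ) • C⁻¹ + (1 / 2 : ℝ) • D⁻¹)) :
    ((1 / 2 : ℝ) • (fromBlocks A 0 0 C)⁻¹ + (1 / 2 : ℝ) • (fromBlocks B 0 0 D)⁻¹)⁻¹ =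
      fromBlocks ((1 / 2 : ℝ) • A⁻¹ + (1 / 2 : ℝ) • B⁻¹)⁻¹ 0 0
        ((1 / 2 : ℝ) • C⁻¹ + (1 / 2 : ℝ) • D⁻¹)⁻¹ := by
  rw [inv_fromBlocks_zero_zero hA hC, inv_fromBlocks_zero_zero hB hD, fromBlocks_smul,
    fromBlocks_smul, fromBlocks_add]
  simp only [smul_zero, add_zero]
  exact inv_fromBlocks_zero_zero hAB hCD

end Matrix

lemma lgKernel_fromBlocks {m n : Type*} [Fintype m] [Fintype n] [DecidableEq m] [DecidableEq n]
    {A B : Matrix m m ℝ} {C D : Matrix n n ℝ} (hA : A.PosDef) (hB : B.PosDef)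
    (hC : C.PosDef) (hD : D.PosDef) :
    lgKernel (fromBlocks A 0 0 C) (fromBlocks B 0 0 D) = lgKernel A B * lgKernel C D := by
  have hAB := hA.half_smul_inv_add_half_smul_inv hB
  have hCD := hC.half_smul_inv_add_half_smul_inv hD
  unfold lgKernel
  rw [inv_half_smul_inv_add_fromBlocks hA.isUnit hB.isUnit hC.isUnit hD.isUnit hAB.isUnit
      hCD.isUnit, det_fromBlocks_zero₂₁, det_fromBlocks_zero₂₁, det_fromBlocks_zero₂₁,
    Real.mul_rpow hAB.inv.det_pos.le hCD.inv.det_pos.le,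
    Real.mul_rpow hA.det_pos.le hC.det_pos.le, Real.mul_rpow hB.det_pos.le hD.det_pos.le]
  ring

lemma lgKernel_self {m : Type*} [Fintype m] [DecidableEq m] {A : Matrix m m ℝ}
    (hA : A.PosDef) : lgKernel A A = 1 := by
  have hdet : 0 < A.det := hA.det_pos
  unfold lgKernel
  rw [← add_smul, add_halves, one_smul, nonsing_inv_nonsing_inv A hdet.ne'.isUnit,
    ← Real.rpow_add hdet, show (1 : ℝ) / 4 + 1 / 4 = 1 / 2 by norm_num]
  exact div_self (Real.rpow_pos_of_pos hdet _).ne'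

theorem lg_kernel_direct_sum_gamma_block {p q : ℕ}
    (A B : Matrix (Fin p) (Fin p) ℝ) (hA : A.PosDef) (hB : B.PosDef)
    (γ : ℝ) (hγ : 0 < γ) :
    lgKernel
        (Matrix.fromBlocks A 0 0 (γ • (1 : Matrix (Fin q) (Fin q) ℝ)))
        (Matrix.fromBlocks B 0 0 (γ • (1 : Matrix (Fin q) (Fin q) ℝ))) =
      lgKernel A B := by
  have hγI : (γ • (1 : Matrix (Fin q) (Fin q) ℝ)).PosDef := PosDef.one.smul hγ
  rw [lgKernel_fromBlocks hA hB hγI hγI, lgKernel_self hγI, mul_one]
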